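/- arXiv:1104.3918 — 4 statements merged into one kernel-verified Lean document; each statement's English description precedes it below -/
import Mathlib

section
/- Relation between the two q-Hermite limits: for every n ≥ 0, Ē†_{−n} = σ( q^{n/2} · τ(Ē_{−n}) ) and Ē†_{n} = σ( q^{-n/2} · τ(Ē_{n}) ), where τ is the K-algebra endomorphism of L with τ(X) = q^{1/2}X (substitution X ↦ q^{1/2}X) and σ is the ℚ-algebra automorphism of L determined by u ↦ u^{-1}, X ↦ X (i.e., q ↦ q^{-1}). -/
/-!
Nonsymmetric continuous q-Hermite polynomials of type A₁ (the `t → 0` and `t → ∞`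
limits of the nonsymmetric Macdonald polynomials), as Laurent polynomials over
`K = ℚ(u)` with `q = u⁴`.
-/

noncomputable section

open LaurentPolynomial

/-- The ground field `K = ℚ(u)`. -/
abbrev K : Type := RatFunc ℚ

/-- `u`, with `q = u⁴` (so `u = q^{1/4}`). -/
def u : K := RatFunc.X

/-- `q = u⁴`. -/
def q : K := u ^ 4

/-- The ring of Laurent polynomials `K[X, X⁻¹]`. -/
abbrev L : Type := LaurentPolynomial K

/-- `∏_{i=0}^{j-1}(1-q^{n-i-1})/(1-q^{1+i})`. -/
def hermProdPos (n j : ℕ) : K :=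
  ∏ i ∈ Finset.range j, (1 - q ^ ((n : ℤ) - i - 1)) / (1 - q ^ ((i : ℤ) + 1))

/-- `∏_{i=0}^{j-1}(1-q^{n-i})/(1-q^{1+i})`. -/
def hermProdNeg (n j : ℕ) : K :=
  ∏ i ∈ Finset.range j, (1 - q ^ ((n : ℤ) - i)) / (1 - q ^ ((i : ℤ) + 1))

/-- `Ē_n` for `n ≥ 1`. -/
def EHpos (n : ℕ) : L :=
  T (n : ℤ)
    + ∑ j ∈ Finset.Icc 1 (n / 2),
        (q ^ ((n : ℤ) - j) * (1 - q ^ (j : ℤ)) / (1 - q ^ ((n : ℤ) - j)) * hermProdPos n j) •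
          T (2 * (j : ℤ) - n)
    + ∑ j ∈ Finset.Icc 1 ((n - 1) / 2),
        (q ^ (j : ℤ) * hermProdPos n j) • T ((n : ℤ) - 2 * j)

/-- `Ē_{-n}` for `n ≥ 1`. -/
def EHneg (n : ℕ) : L :=
  T (-(n : ℤ)) + T (n : ℤ)
    + ∑ j ∈ Finset.Icc 1 (n / 2), hermProdNeg n j • T (2 * (j : ℤ) - n)
    + ∑ j ∈ Finset.Icc 1 ((n - 1) / 2), hermProdNeg n j • T ((n : ℤ) - 2 * j)

/-- The nonsymmetric continuous q-Hermite polynomials `Ē_n`, `n ∈ ℤ`. -/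
def EH : ℤ → L := fun n => if 0 < n then EHpos n.toNat else if n = 0 then 1 else EHneg (-n).toNat

/-- `Ē†_n` for `n ≥ 1`. -/
def EHdagPos (n : ℕ) : L :=
  T (n : ℤ)
    + ∑ j ∈ Finset.Icc 1 (n / 2),
        (q ^ ((n : ℤ) - j - j * ((n : ℤ) - j)) * (1 - q ^ (j : ℤ)) / (1 - q ^ ((n : ℤ) - j)) *
          hermProdPos n j) • T (2 * (j : ℤ) - n)
    + ∑ j ∈ Finset.Icc 1 ((n - 1) / 2),
        (q ^ ((j : ℤ) - j * ((n : ℤ) - j)) * hermProdPos n j) • T ((n : ℤ) - 2 * j)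

/-- `Ē†_{-n}` for `n ≥ 1`. -/
def EHdagNeg (n : ℕ) : L :=
  T (-(n : ℤ)) + q ^ (-(n : ℤ)) • T (n : ℤ)
    + ∑ j ∈ Finset.Icc 1 (n / 2),
        (q ^ (-(j : ℤ) * ((n : ℤ) - j + 1)) * hermProdNeg n j) • T (2 * (j : ℤ) - n)
    + ∑ j ∈ Finset.Icc 1 ((n - 1) / 2),
        (q ^ (2 * (j : ℤ) - n - j * ((n : ℤ) - j + 1)) * hermProdNeg n j) • T ((n : ℤ) - 2 * j)

/-- The `t → ∞` limits `Ē†_n` of the nonsymmetric Macdonald polynomials, `n ∈ ℤ`. -/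
def EHdag : ℤ → L := fun n =>
  if 0 < n then EHdagPos n.toNat else if n = 0 then 1 else EHdagNeg (-n).toNat
/-- The `K`-algebra endomorphism `τ` of `L` with `τ(X) = q^{1/2}X`
(substitution `X ↦ q^{1/2}X`). -/
def tauOp (f : L) : L := f.coeff.sum fun e r => (r * (u ^ 2) ^ e) • T e

/-- The conjugation `u ↦ u⁻¹` of `K = ℚ(u)` (sending a rational function
`num/denom` to `num(u⁻¹)/denom(u⁻¹)`); this is the `ℚ`-algebra automorphism of `K`
determined by `u ↦ u⁻¹`, i.e. `q ↦ q⁻¹`. -/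
def conjU : K → K := RatFunc.eval RatFunc.C (RatFunc.X⁻¹)

/-- The `ℚ`-algebra automorphism `σ` of `L` determined by `u ↦ u⁻¹` (i.e. `q ↦ q⁻¹`)
and `X ↦ X`. -/
def sigmaOp (f : L) : L := f.coeff.sum fun e r => conjU r • T e

/-!
Both operators act on `c • T e` through the coefficient alone: `τ` multiplies it by `(u²)ᵉ` and
`σ` applies the field automorphism `u ↦ u⁻¹`, so `σ((u²)ᵐ • τ(c • T e)) = (u²)^(-(m+e)) σ(c) • T e`,
and `m + e` is even for every monomial of `Ē_{∓n}` when `m = ±n`. Since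
`σ((1 - qᵃ)/(1 - qᵇ)) = q^(b-a) (1 - qᵃ)/(1 - qᵇ)`, `σ` multiplies each product
`∏ (1 - q^(n-i))/(1 - q^(1+i))` by an explicit power of `q`, and the theorem reduces to
matching exponents of `q`, coefficient by coefficient.
-/

section Coeffwise

variable {R : Type*} [Semiring R]

def coeffwise (g : ℤ → R →+ R) : R[T;T⁻¹] →+ R[T;T⁻¹] :=
  (Finsupp.liftAddHom fun e => ((smulAddHom R R[T;T⁻¹]).flip (T e)).comp (g e)).comp
    AddMonoidAlgebra.coeffAddEquiv.toAddMonoidHom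

lemma coeffwise_apply (g : ℤ → R →+ R) (f : R[T;T⁻¹]) :
    coeffwise g f = f.coeff.sum fun e r => g e r • T e := rfl

lemma coeffwise_smul_T (g : ℤ → R →+ R) (c : R) (e : ℤ) :
    coeffwise g (c • T e) = g e c • T e := by
  rw [coeffwise_apply, AddMonoidAlgebra.coeff_smul, T, AddMonoidAlgebra.coeff_single,
    Finsupp.smul_single_one, Finsupp.sum_single_index (by simp), T]

end Coeffwise

lemma eval₂_C_X_inv_injective {F : Type*} [Field F] :
    Function.Injective (Polynomial.eval₂RingHom (RatFunc.C : F →+* RatFunc F) RatFunc.X⁻¹) := by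
  have h := transcendental_iff_injective.mp
    (mt IsAlgebraic.inv_iff.mp (RatFunc.transcendental_X (K := F)))
  rwa [← RatFunc.algebraMap_eq_C]

-- `RatFunc.eval` is not additive in general; it is here because `u⁻¹` is transcendental.
def conjRingHom : K →+* K :=
  RatFunc.liftRingHom (Polynomial.eval₂RingHom RatFunc.C RatFunc.X⁻¹)
    (nonZeroDivisors_le_comap_nonZeroDivisors_of_injective _ eval₂_C_X_inv_injective)

lemma conjU_eq_conjRingHom : conjU = conjRingHom := by
  ext f
  rw [conjRingHom, RatFunc.liftRingHom_apply]
  rfl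

lemma conjRingHom_u : conjRingHom u = u⁻¹ := by
  simp [conjRingHom, u, ← RatFunc.algebraMap_X]

lemma q_ne_zero : q ≠ 0 := pow_ne_zero _ RatFunc.X_ne_zero

lemma u_sq_ne_zero : u ^ 2 ≠ 0 := pow_ne_zero _ RatFunc.X_ne_zero

lemma u_sq_zpow_two_mul (k : ℤ) : (u ^ 2) ^ (2 * k) = q ^ k := by
  rw [zpow_mul, q, zpow_ofNat, ← pow_mul]

lemma conjRingHom_u_sq_zpow (m : ℤ) : conjRingHom ((u ^ 2) ^ m) = (u ^ 2) ^ (-m) := by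
  rw [map_zpow₀, map_pow, conjRingHom_u, inv_pow, inv_zpow']

lemma conjRingHom_q_zpow (m : ℤ) : conjRingHom (q ^ m) = q ^ (-m) := by
  rw [map_zpow₀, q, map_pow, conjRingHom_u, inv_pow, inv_zpow']

lemma one_sub_q_zpow_neg (a : ℤ) : 1 - q ^ (-a) = -q ^ (-a) * (1 - q ^ a) := by
  rw [neg_mul, mul_sub, mul_one, ← zpow_add₀ q_ne_zero, neg_add_cancel, zpow_zero, neg_sub]

lemma conjRingHom_one_sub_q_zpow_div (a b : ℤ) :
    conjRingHom ((1 - q ^ a) / (1 - q ^ b)) = q ^ (b - a) * ((1 - q ^ a) / (1 - q ^ b)) := by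
  rw [map_div₀, map_sub, map_sub, map_one, conjRingHom_q_zpow, conjRingHom_q_zpow,
    one_sub_q_zpow_neg, one_sub_q_zpow_neg, neg_mul, neg_mul, neg_div_neg_eq, mul_div_mul_comm,
    ← zpow_sub₀ q_ne_zero, neg_sub_neg]

lemma conjRingHom_hermProdNeg (n j : ℕ) :
    conjRingHom (hermProdNeg n j) = q ^ ((j : ℤ) * j - n * j) * hermProdNeg n j := by
  induction j with
  | zero => simp [hermProdNeg]
  | succ j ih =>
    simp only [hermProdNeg, Finset.prod_range_succ] at ih ⊢
    rw [map_mul, ih, conjRingHom_one_sub_q_zpow_div, mul_mul_mul_comm, ← zpow_add₀ q_ne_zero]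
    congr 2
    push_cast
    ring

lemma conjRingHom_hermProdPos (n j : ℕ) :
    conjRingHom (hermProdPos n j) = q ^ ((j : ℤ) * j + j - n * j) * hermProdPos n j := by
  induction j with
  | zero => simp [hermProdPos]
  | succ j ih =>
    simp only [hermProdPos, Finset.prod_range_succ] at ih ⊢
    rw [map_mul, ih, conjRingHom_one_sub_q_zpow_div, mul_mul_mul_comm, ← zpow_add₀ q_ne_zero]
    congr 2
    push_cast
    ring

lemma sigmaOp_eq_coeffwise (f : L) :
    sigmaOp f = coeffwise (fun _ => conjRingHom.toAddMonoidHom) f := by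
  rw [sigmaOp, conjU_eq_conjRingHom]
  rfl

def twist (m : ℤ) : L →+ L :=
  coeffwise fun e => (AddMonoidHom.mulLeft ((u ^ 2) ^ (-(m + e)))).comp conjRingHom.toAddMonoidHom

lemma sigmaOp_smul_tauOp (m : ℤ) (f : L) : sigmaOp ((u ^ 2) ^ m • tauOp f) = twist m f := by
  rw [tauOp, Finsupp.smul_sum, sigmaOp_eq_coeffwise, map_finsuppSum, twist, coeffwise_apply]
  refine Finsupp.sum_congr fun e _ => ?_
  rw [smul_smul, coeffwise_smul_T]
  simp only [RingHom.toAddMonoidHom_eq_coe, AddMonoidHom.coe_comp, AddMonoidHom.coe_coe,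
    Function.comp_apply, AddMonoidHom.coe_mulLeft, map_mul, conjRingHom_u_sq_zpow]
  rw [mul_left_comm, ← zpow_add₀ u_sq_ne_zero, ← neg_add, mul_comm]

lemma twist_smul_T {m e k : ℤ} (hk : m + e = 2 * k) (c : K) :
    twist m (c • T e) = (q ^ (-k) * conjRingHom c) • T e := by
  rw [twist, coeffwise_smul_T, hk, ← mul_neg, u_sq_zpow_two_mul]
  rfl

lemma twist_T {m e k : ℤ} (hk : m + e = 2 * k) : twist m (T e) = q ^ (-k) • T e := by
  simpa using twist_smul_T hk 1

lemma EHdagNeg_eq_twist (n : ℕ) : EHdagNeg n = twist n (EHneg n) := by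
  rw [EHneg, EHdagNeg]
  simp only [map_add, map_sum]
  rw [twist_T (k := 0) (by ring), twist_T (k := n) (by ring), neg_zero, zpow_zero, one_smul]
  congr 1
  congr 1
  all_goals refine Finset.sum_congr rfl fun j _ => ?_
  · rw [twist_smul_T (k := j) (by ring), conjRingHom_hermProdNeg, ← mul_assoc,
      ← zpow_add₀ q_ne_zero]
    congr 3
    ring
  · rw [twist_smul_T (k := n - j) (by ring), conjRingHom_hermProdNeg, ← mul_assoc,
      ← zpow_add₀ q_ne_zero]
    congr 3
    ring

lemma EHdagPos_eq_twist (n : ℕ) : EHdagPos n = twist (-n) (EHpos n) := by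
  rw [EHpos, EHdagPos]
  simp only [map_add, map_sum]
  rw [twist_T (k := 0) (by ring), neg_zero, zpow_zero, one_smul]
  congr 1
  congr 1
  all_goals refine Finset.sum_congr rfl fun j _ => ?_
  · rw [twist_smul_T (k := j - n) (by ring), mul_div_assoc, mul_div_assoc]
    simp only [map_mul, conjRingHom_q_zpow, conjRingHom_one_sub_q_zpow_div, conjRingHom_hermProdPos]
    congr 1
    rw [show (n : ℤ) - j - j * (n - j) = -(j - n) + (-(n - j) + (n - j - j + (j * j + j - n * j)))
      by ring, zpow_add₀ q_ne_zero, zpow_add₀ q_ne_zero, zpow_add₀ q_ne_zero]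
    ring
  · rw [twist_smul_T (k := -j) (by ring)]
    simp only [map_mul, conjRingHom_q_zpow, conjRingHom_hermProdPos]
    congr 1
    rw [show (j : ℤ) - j * (n - j) = - -j + (-j + (j * j + j - n * j)) by ring,
      zpow_add₀ q_ne_zero, zpow_add₀ q_ne_zero]
    ring

/-- Relation between the two q-Hermite limits: for every `n ≥ 0`,
`Ē†_{-n} = σ(q^{n/2}·τ(Ē_{-n}))` and `Ē†_n = σ(q^{-n/2}·τ(Ē_n))`. -/
theorem hermite_dag_via_conjugation (n : ℕ) :
    EHdag (-(n : ℤ)) = sigmaOp (((u ^ 2) ^ (n : ℤ)) • tauOp (EH (-(n : ℤ)))) ∧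
    EHdag (n : ℤ) = sigmaOp (((u ^ 2) ^ (-(n : ℤ))) • tauOp (EH (n : ℤ))) := by
  simp only [sigmaOp_smul_tauOp]
  obtain rfl | hn := Nat.eq_zero_or_pos n
  · simp only [EHdag, EH, Nat.cast_zero, neg_zero, lt_irrefl, if_false, if_true, and_self]
    rw [← T_zero, twist_T (k := 0) (by ring), neg_zero, zpow_zero, one_smul]
  · have hneg : ¬(0 : ℤ) < -n := by omega
    have hne : -(n : ℤ) ≠ 0 := by omega
    have hpos : (0 : ℤ) < n := by omega
    simp only [EHdag, EH, hneg, hne, hpos, if_false, if_true, neg_neg, Int.toNat_natCast]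
    exact ⟨EHdagNeg_eq_twist n, EHdagPos_eq_twist n⟩
end
end

section
/- Intertwiner lemma for modules over the core subalgebra: let M be a left A-module, Λ ∈ K with Λ ≠ 0, and e ∈ M. (i) If Y·e = Λ·e, then Y′·e = 0, X̃′·e = 0, Y·(X̃·e) = q^{-1/2}Λ·(X̃·e), Y′·(T′·e) = Λ·(T′·e), Y·(T′·e) = 0, T·(T′·e) = 0, and if T′·e = 0 then X̃·e = 0 (here T′ := T + 1). (ii) If Y′·e = Λ·e, then Y·e = 0, T·e = 0, Y·(X̃·e) = q^{-1/2}Λ·(X̃·e), and if X̃·e = 0 then X̃′·e = 0. -/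
/-!
The core subalgebra `H̃_{Y,X̃}` of the one-dimensional nil-DAHA, presented by
generators `T, X̃, X̃′, Y, Y′` over `K = ℚ(u)` (with `q^{1/2} = u²`) and the relations
listed below (writing `T′ = T + 1`).
-/

noncomputable section

/-- The five generators of the core subalgebra. -/
inductive Gen : Type
  | T : Gen
  | Xt : Gen
  | Xt' : Gen
  | Y : Gen
  | Y' : Gen

open FreeAlgebra

/-- The generator `T` of the free algebra. -/
def fT : FreeAlgebra K Gen := ι K Gen.T
/-- The generator `X̃` of the free algebra. -/
def fXt : FreeAlgebra K Gen := ι K Gen.Xt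
/-- The generator `X̃′` of the free algebra. -/
def fXt' : FreeAlgebra K Gen := ι K Gen.Xt'
/-- The generator `Y` of the free algebra. -/
def fY : FreeAlgebra K Gen := ι K Gen.Y
/-- The generator `Y′` of the free algebra. -/
def fY' : FreeAlgebra K Gen := ι K Gen.Y'

/-- The defining relations of the core subalgebra `H̃_{Y,X̃}` (with `T′ = T + 1`):
`TT′ = 0`; `X̃X̃′ = 0 = X̃′X̃`; `YY′ = 0 = Y′Y`; `X̃T = 0`; `T′X̃′ = 0`; `YT′ = 0`;
`TY′ = 0`; `X̃′Y = 0`; `Y′X̃ = 0`; `TX̃ = X̃′T′`; `T′Y = Y′T`; `X̃Y′ = -q^{1/2}·YX̃′`;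
`X̃Y = q^{1/2}·Y(X̃ + X̃′)`; `X̃′Y′ = q^{1/2}·(Y′ + Y)X̃′`. -/
inductive CoreRel : FreeAlgebra K Gen → FreeAlgebra K Gen → Prop
  | TT' : CoreRel (fT * (fT + 1)) 0
  | XtXt' : CoreRel (fXt * fXt') 0
  | Xt'Xt : CoreRel (fXt' * fXt) 0
  | YY' : CoreRel (fY * fY') 0
  | Y'Y : CoreRel (fY' * fY) 0
  | XtT : CoreRel (fXt * fT) 0
  | T'Xt' : CoreRel ((fT + 1) * fXt') 0
  | YT' : CoreRel (fY * (fT + 1)) 0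
  | TY' : CoreRel (fT * fY') 0
  | Xt'Y : CoreRel (fXt' * fY) 0
  | Y'Xt : CoreRel (fY' * fXt) 0
  | TXt : CoreRel (fT * fXt) (fXt' * (fT + 1))
  | T'Y : CoreRel ((fT + 1) * fY) (fY' * fT)
  | XtY' : CoreRel (fXt * fY') (-((u ^ 2 : K) • (fY * fXt')))
  | XtY : CoreRel (fXt * fY) ((u ^ 2 : K) • (fY * (fXt + fXt')))
  | Xt'Y' : CoreRel (fXt' * fY') ((u ^ 2 : K) • ((fY' + fY) * fXt'))

/-- The core subalgebra `H̃_{Y,X̃}` of the nil-DAHA of type `A₁`: the quotient of the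
free `K`-algebra on the five generators by the two-sided ideal generated by the
defining relations. -/
abbrev CoreAlg : Type := RingQuot CoreRel

/-- The image of the generator `T` in the core subalgebra. -/
def aT : CoreAlg := RingQuot.mkAlgHom K CoreRel fT
/-- The image of the generator `X̃` in the core subalgebra. -/
def aXt : CoreAlg := RingQuot.mkAlgHom K CoreRel fXt
/-- The image of the generator `X̃′` in the core subalgebra. -/
def aXt' : CoreAlg := RingQuot.mkAlgHom K CoreRel fXt'
/-- The image of the generator `Y` in the core subalgebra. -/
def aY : CoreAlg := RingQuot.mkAlgHom K CoreRel fY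
/-- The image of the generator `Y′` in the core subalgebra. -/
def aY' : CoreAlg := RingQuot.mkAlgHom K CoreRel fY'
section Aux

lemma u_ne_zero : (u : K) ≠ 0 := RatFunc.X_ne_zero

lemma u2_ne_zero : (u ^ 2 : K) ≠ 0 := pow_ne_zero _ u_ne_zero

lemma relEq {a b : FreeAlgebra K Gen} (h : CoreRel a b) :
    RingQuot.mkAlgHom K CoreRel a = RingQuot.mkAlgHom K CoreRel b :=
  RingQuot.mkAlgHom_rel K h

lemma rYY' : aY * aY' = 0 := by
  simpa [aY, aY', map_mul] using relEq CoreRel.YY'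

lemma rY'Y : aY' * aY = 0 := by
  simpa [aY, aY', map_mul] using relEq CoreRel.Y'Y

lemma rXt'Y : aXt' * aY = 0 := by
  simpa [aXt', aY, map_mul] using relEq CoreRel.Xt'Y

lemma rTY' : aT * aY' = 0 := by
  simpa [aT, aY', map_mul] using relEq CoreRel.TY'

lemma rYT' : aY * (aT + 1) = 0 := by
  simpa [aY, aT, map_mul, map_add, map_one] using relEq CoreRel.YT'

lemma rTT' : aT * (aT + 1) = 0 := by
  simpa [aT, map_mul, map_add, map_one] using relEq CoreRel.TT'

lemma rXtT : aXt * aT = 0 := by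
  simpa [aXt, aT, map_mul] using relEq CoreRel.XtT

lemma rT'Y : (aT + 1) * aY = aY' * aT := by
  simpa [aT, aY, aY', map_mul, map_add, map_one] using relEq CoreRel.T'Y

lemma rXtY : aXt * aY = (u ^ 2 : K) • (aY * (aXt + aXt')) := by
  simpa [aXt, aXt', aY, map_mul, map_add, map_smul] using relEq CoreRel.XtY

lemma rXtY' : aXt * aY' = -((u ^ 2 : K) • (aY * aXt')) := by
  simpa [aXt, aXt', aY, aY', map_mul, map_smul, map_neg] using relEq CoreRel.XtY'

lemma rTXt : aT * aXt = aXt' * (aT + 1) := by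
  simpa [aT, aXt, aXt', map_mul, map_add, map_one] using relEq CoreRel.TXt

variable {M : Type} [AddCommGroup M] [Module CoreAlg M]

lemma smul_comm_alg (x : CoreAlg) (c : K) (v : M) :
    x • ((algebraMap K CoreAlg c) • v) = algebraMap K CoreAlg c • (x • v) := by
  rw [← mul_smul, ← mul_smul, Algebra.commutes]

lemma ksmul_smul (c : K) (x : CoreAlg) (v : M) :
    (c • x) • v = algebraMap K CoreAlg c • (x • v) := by
  rw [Algebra.smul_def, mul_smul]

lemma alg_eq {c : K} (hc : c ≠ 0) {v w : M}
    (h : algebraMap K CoreAlg c • v = w) : v = algebraMap K CoreAlg c⁻¹ • w := by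
  rw [← h, ← mul_smul, ← map_mul, inv_mul_cancel₀ hc, map_one, one_smul]

lemma alg_cancel {c : K} (hc : c ≠ 0) {v : M}
    (h : algebraMap K CoreAlg c • v = 0) : v = 0 := by
  simpa using alg_eq hc h

end Aux

/-- Intertwiner lemma for modules over the core subalgebra.  Let `M` be a left module
over the core subalgebra `A = H̃_{Y,X̃}`, `Λ ∈ K` with `Λ ≠ 0`, and `e ∈ M`
(scalars `Λ ∈ K` act via `algebraMap K A`).
(i) If `Y·e = Λ·e`, then `Y′·e = 0`, `X̃′·e = 0`, `Y·(X̃·e) = q^{-1/2}Λ·(X̃·e)`,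
`Y′·(T′·e) = Λ·(T′·e)`, `Y·(T′·e) = 0`, `T·(T′·e) = 0`, and if `T′·e = 0` then
`X̃·e = 0` (here `T′ = T + 1`).
(ii) If `Y′·e = Λ·e`, then `Y·e = 0`, `T·e = 0`, `Y·(X̃·e) = q^{-1/2}Λ·(X̃·e)`,
and if `X̃·e = 0` then `X̃′·e = 0`. -/

theorem core_intertwiner_lemma (M : Type) [AddCommGroup M] [Module CoreAlg M]
    (Λ : K) (hΛ : Λ ≠ 0) (e : M) :
    (aY • e = algebraMap K CoreAlg Λ • e →
      (aY' • e = 0 ∧ aXt' • e = 0 ∧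
        aY • (aXt • e) = algebraMap K CoreAlg ((u ^ 2)⁻¹ * Λ) • (aXt • e) ∧
        aY' • ((aT + 1) • e) = algebraMap K CoreAlg Λ • ((aT + 1) • e) ∧
        aY • ((aT + 1) • e) = 0 ∧
        aT • ((aT + 1) • e) = 0 ∧
        ((aT + 1) • e = 0 → aXt • e = 0))) ∧
    (aY' • e = algebraMap K CoreAlg Λ • e →
      (aY • e = 0 ∧ aT • e = 0 ∧
        aY • (aXt • e) = algebraMap K CoreAlg ((u ^ 2)⁻¹ * Λ) • (aXt • e) ∧
        (aXt • e = 0 → aXt' • e = 0))) := by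
  set z : CoreAlg := algebraMap K CoreAlg Λ with hz
  constructor
  · intro h
    -- Y' e = 0
    have hY'e : aY' • e = 0 := by
      have h1 : (aY' * aY) • e = 0 := by rw [rY'Y, zero_smul]
      rw [mul_smul, h, smul_comm_alg] at h1
      exact alg_cancel hΛ h1
    -- X̃' e = 0
    have hXt'e : aXt' • e = 0 := by
      have h1 : (aXt' * aY) • e = 0 := by rw [rXt'Y, zero_smul]
      rw [mul_smul, h, smul_comm_alg] at h1
      exact alg_cancel hΛ h1
    -- Y (X̃ e)
    have hYXt : aY • (aXt • e) = algebraMap K CoreAlg ((u ^ 2)⁻¹ * Λ) • (aXt • e) := by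
      have h1 : (aXt * aY) • e = ((u ^ 2 : K) • (aY * (aXt + aXt'))) • e := by
        rw [rXtY]
      rw [mul_smul, h, smul_comm_alg, ksmul_smul, mul_smul, add_smul, hXt'e, add_zero] at h1
      have h2 := alg_eq u2_ne_zero h1.symm
      rw [h2, map_mul, mul_smul]
    refine ⟨hY'e, hXt'e, hYXt, ?_, ?_, ?_, ?_⟩
    · -- Y' (T' e) = Λ (T' e)
      have h1 : ((aT + 1) * aY) • e = (aY' * aT) • e := by rw [rT'Y]
      rw [mul_smul, h, smul_comm_alg, mul_smul] at h1
      have h2 : aY' • ((aT + 1) • e) = aY' • (aT • e) + aY' • e := by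
        rw [add_smul, one_smul, smul_add]
      rw [h2, ← h1, hY'e, add_zero]
    · have h1 : (aY * (aT + 1)) • e = 0 := by rw [rYT', zero_smul]
      rwa [mul_smul] at h1
    · have h1 : (aT * (aT + 1)) • e = 0 := by rw [rTT', zero_smul]
      rwa [mul_smul] at h1
    · intro h0
      have hTe : aT • e = -e := by
        have h2 : aT • e + e = 0 := by
          have h3 := h0
          rwa [add_smul, one_smul] at h3
        exact eq_neg_of_add_eq_zero_left h2
      have h1 : (aXt * aT) • e = 0 := by rw [rXtT, zero_smul]
      rw [mul_smul, hTe, smul_neg, neg_eq_zero] at h1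
      exact h1
  · intro h
    -- Y e = 0
    have hYe : aY • e = 0 := by
      have h1 : (aY * aY') • e = 0 := by rw [rYY', zero_smul]
      rw [mul_smul, h, smul_comm_alg] at h1
      exact alg_cancel hΛ h1
    -- T e = 0
    have hTe : aT • e = 0 := by
      have h1 : (aT * aY') • e = 0 := by rw [rTY', zero_smul]
      rw [mul_smul, h, smul_comm_alg] at h1
      exact alg_cancel hΛ h1
    -- Y (X̃ e)
    have hYXt : aY • (aXt • e) = algebraMap K CoreAlg ((u ^ 2)⁻¹ * Λ) • (aXt • e) := by
      -- from X̃Y' relation: z • (X̃ e) = -(u² • Y (X̃' e))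
      have h1 : (aXt * aY') • e = (-((u ^ 2 : K) • (aY * aXt'))) • e := by rw [rXtY']
      rw [mul_smul, h, smul_comm_alg, neg_smul, ksmul_smul, mul_smul] at h1
      -- from X̃Y relation: 0 = u² • (Y (X̃ e) + Y (X̃' e))
      have h2 : (aXt * aY) • e = ((u ^ 2 : K) • (aY * (aXt + aXt'))) • e := by rw [rXtY]
      rw [mul_smul, hYe, smul_zero, ksmul_smul, mul_smul, add_smul, smul_add] at h2
      have h3 : aY • (aXt • e) + aY • (aXt' • e) = 0 :=
        alg_cancel u2_ne_zero h2.symm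
      have h4 : aY • (aXt • e) = -(aY • (aXt' • e)) :=
        eq_neg_of_add_eq_zero_left h3
      have h5 : algebraMap K CoreAlg (u ^ 2 : K) • (aY • (aXt • e))
          = algebraMap K CoreAlg Λ • (aXt • e) := by
        rw [h4, smul_neg, ← h1]
      have h6 := alg_eq u2_ne_zero h5
      rw [h6, ← mul_smul, ← map_mul]
    refine ⟨hYe, hTe, hYXt, ?_⟩
    · intro hx
      have h1 : (aT * aXt) • e = (aXt' * (aT + 1)) • e := by rw [rTXt]
      rw [mul_smul, hx, smul_zero, mul_smul, add_smul, one_smul, hTe, zero_add] at h1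
      exact h1.symm
end
end

section
/- The spinor Dunkl operators for the q-Toda theory represent the relations of the one-dimensional nil-DAHA: the operators on the spinor space V satisfy Ŷ ∘ Ŷ′ = id_V = Ŷ′ ∘ Ŷ (so Ŷ is invertible with inverse Ŷ′), π̂ ∘ π̂ = id_V, T̂ ∘ (T̂ + id_V) = 0, π̂ ∘ Ŷ ∘ π̂ = q^{-1/2} · Ŷ′, and T̂ ∘ Ŷ′ = Ŷ ∘ (T̂ + id_V). -/
/-!
The spinor Dunkl operators for the q-Toda theory of type A₁, acting on the space
`V = L × L` of spinors, where `L = K[X,X⁻¹]` is the ring of Laurent polynomials over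
`K = ℚ(u)`, `q = u⁴`.
-/

noncomputable section

open LaurentPolynomial

/-- The space of spinors: pairs of Laurent polynomials. -/
abbrev V : Type := L × L

/-- The `K`-algebra automorphism `Γ` of `L` with `Γ(X) = q^{1/2}X`. -/
def gam (f : L) : L := f.coeff.sum fun e r => (r * (u ^ 2) ^ e) • T e

/-- The inverse automorphism `Γ⁻¹`, with `Γ⁻¹(X) = q^{-1/2}X`. -/
def gamInv (f : L) : L := f.coeff.sum fun e r => (r * (u ^ 2) ^ (-e)) • T e

/-- The spinor operator `T̂(f₁,f₂) = (0, f₁ - f₂)`. -/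
def That (p : V) : V := (0, p.1 - p.2)

/-- The spinor operator `π̂(f₁,f₂) = (X·f₂ + X⁻¹·(f₁-f₂), X⁻¹·(f₁-f₂))`. -/
def piHat (p : V) : V :=
  (T 1 * p.2 + T (-1) * (p.1 - p.2), T (-1) * (p.1 - p.2))

/-- The spinor Dunkl operator
`Ŷ(f₁,f₂) = (Γ⁻¹(f₁-f₂), Γ(f₂) - Γ(X⁻²·(f₂-f₁)))`. -/
def Yhat (p : V) : V :=
  (gamInv (p.1 - p.2), gam p.2 - gam (T (-2) * (p.2 - p.1)))

/-- The spinor Dunkl operator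
`Ŷ′(f₁,f₂) = ((1-X⁻²)·Γ(f₁) + Γ⁻¹(f₂), Γ⁻¹(f₂) - X⁻²·Γ(f₁))`. -/
def Yhat' (p : V) : V :=
  ((1 - T (-2)) * gam p.1 + gamInv p.2, gamInv p.2 - T (-2) * gam p.1)

/-!
`Γ` and `Γ⁻¹` are the dilations `X ↦ q^{±1/2} X` of `K[X,X⁻¹]`, mutually inverse `K`-algebra
automorphisms; after pushing them through sums and products, each relation is an identity in the
commutative ring `L` that uses only `X · X⁻¹ = 1`. For `π̂Ŷπ̂` the point is that
`Ŷπ̂(f₁,f₂) = q^{-1/2} (X Γ⁻¹f₂, X⁻¹ Γf₁)`, because `Γ⁻¹(X) = q^{-1/2} X` and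
`Γ(X⁻¹) = q^{-1/2} X⁻¹`, while `π̂ (X g, X⁻¹ h) = ((1 - X⁻²) h + g, g - X⁻² h)` has exactly the
shape of `Ŷ′`. The two relations involving `T̂ + 1` only see the diagonal `(f₁, f₁)`.
-/

namespace LaurentPolynomial

variable {R : Type*} [CommSemiring R]

def dilateHom (c : Rˣ) : Multiplicative ℤ →* R[T;T⁻¹] where
  toFun n := C ((c ^ n.toAdd : Rˣ) : R) * T n.toAdd
  map_one' := by simp
  map_mul' m n := by
    simp only [toAdd_mul, zpow_add, Units.val_mul, map_mul, T_add]
    ring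

def dilate (c : Rˣ) : R[T;T⁻¹] →ₐ[R] R[T;T⁻¹] :=
  AddMonoidAlgebra.lift R R[T;T⁻¹] ℤ (dilateHom c)

theorem dilate_apply (c : Rˣ) (f : R[T;T⁻¹]) :
    dilate c f = f.coeff.sum fun n r => (r * ((c ^ n : Rˣ) : R)) • T n := by
  rw [dilate, AddMonoidAlgebra.lift_apply]
  refine Finsupp.sum_congr fun n _ => ?_
  simp only [dilateHom, MonoidHom.coe_mk, OneHom.coe_mk, toAdd_ofAdd, smul_eq_C_mul, map_mul,
    mul_assoc]

@[simp]
theorem dilate_T (c : Rˣ) (n : ℤ) : dilate c (T n) = C ((c ^ n : Rˣ) : R) * T n := by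
  rw [dilate, T, AddMonoidAlgebra.lift_single, one_smul]
  rfl

@[simp]
theorem dilate_C (c : Rˣ) (r : R) : dilate c (C r) = C r := by
  rw [C_eq_algebraMap, AlgHom.commutes]

theorem dilate_mul (c d : Rˣ) : dilate (c * d) = (dilate c).comp (dilate d) := by
  refine AddMonoidAlgebra.algHom_ext (fun n => ?_) (Subsingleton.elim _ _)
  change dilate (c * d) (T n) = dilate c (dilate d (T n))
  simp only [dilate_T, map_mul, dilate_C, mul_zpow, Units.val_mul]
  ring

theorem dilate_one : dilate (1 : Rˣ) = AlgHom.id R R[T;T⁻¹] := by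
  refine AddMonoidAlgebra.algHom_ext (fun n => ?_) (Subsingleton.elim _ _)
  change dilate 1 (T n) = T n
  simp

theorem dilate_dilate_inv (c : Rˣ) (f : R[T;T⁻¹]) : dilate c (dilate c⁻¹ f) = f := by
  rw [← AlgHom.comp_apply, ← dilate_mul, mul_inv_cancel, dilate_one, AlgHom.id_apply]

theorem dilate_inv_dilate (c : Rˣ) (f : R[T;T⁻¹]) : dilate c⁻¹ (dilate c f) = f := by
  rw [← AlgHom.comp_apply, ← dilate_mul, inv_mul_cancel, dilate_one, AlgHom.id_apply]

end LaurentPolynomial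

def sqrtQ : Kˣ := Units.mk0 (u ^ 2) (pow_ne_zero 2 RatFunc.X_ne_zero)

theorem val_sqrtQ_inv : ((sqrtQ⁻¹ : Kˣ) : K) = (u ^ 2)⁻¹ := by
  rw [Units.val_inv_eq_inv_val, sqrtQ, Units.val_mk0]

theorem gam_eq_dilate : gam = dilate sqrtQ := by
  funext f
  simp only [gam, dilate_apply, Units.val_zpow_eq_zpow_val, sqrtQ, Units.val_mk0]

theorem gamInv_eq_dilate : gamInv = dilate sqrtQ⁻¹ := by
  funext f
  simp only [gamInv, dilate_apply, inv_zpow', Units.val_zpow_eq_zpow_val, sqrtQ, Units.val_mk0]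

theorem T_one_mul_T_neg_one : (T 1 : L) * T (-1) = 1 := by
  rw [← T_add, add_neg_cancel, T_zero]

theorem T_neg_two : (T (-2) : L) = T (-1) * T (-1) := by
  rw [← T_add]; norm_num

theorem Yhat_Yhat' (p : V) : Yhat (Yhat' p) = p := by
  simp only [Yhat, Yhat', gam_eq_dilate, gamInv_eq_dilate, map_add, map_sub, map_mul, map_one,
    dilate_dilate_inv, dilate_inv_dilate]
  ext : 1 <;> ring

theorem Yhat'_Yhat (p : V) : Yhat' (Yhat p) = p := by
  simp only [Yhat, Yhat', gam_eq_dilate, gamInv_eq_dilate, map_sub, map_mul,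
    dilate_dilate_inv, dilate_inv_dilate]
  ext : 1 <;> ring

theorem piHat_fst_sub_snd (p : V) : (piHat p).1 - (piHat p).2 = T 1 * p.2 := by
  simp only [piHat]; ring

theorem piHat_piHat (p : V) : piHat (piHat p) = p := by
  rw [piHat, piHat_fst_sub_snd]
  ext : 1
  · simp only [piHat]
    linear_combination p.1 * T_one_mul_T_neg_one
  · linear_combination p.2 * T_one_mul_T_neg_one

theorem piHat_smul (c : K) (p : V) : piHat (c • p) = c • piHat p := by
  simp only [piHat, Prod.smul_fst, Prod.smul_snd, Prod.smul_mk, ← smul_sub, mul_smul_comm,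
    ← smul_add]

theorem piHat_T_mul (f g : L) :
    piHat (T 1 * f, T (-1) * g) = ((1 - T (-2)) * g + f, f - T (-2) * g) := by
  simp only [piHat, Prod.mk.injEq]
  constructor
  · linear_combination (f + g) * T_one_mul_T_neg_one + g * T_neg_two
  · linear_combination f * T_one_mul_T_neg_one + g * T_neg_two

theorem Yhat_piHat (p : V) :
    Yhat (piHat p) = ((u ^ 2)⁻¹ : K) • (T 1 * gamInv p.2, T (-1) * gam p.1) := by
  have hsnd : (piHat p).2 - T (-2) * ((piHat p).2 - (piHat p).1) = T (-1) * p.1 := by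
    rw [← neg_sub (piHat p).1, piHat_fst_sub_snd]
    simp only [piHat]
    linear_combination (T (-1) * p.2) * T_one_mul_T_neg_one + (T 1 * p.2) * T_neg_two
  rw [Yhat, piHat_fst_sub_snd, gam_eq_dilate, ← map_sub, hsnd, gamInv_eq_dilate]
  simp only [map_mul, dilate_T, zpow_one, zpow_neg_one, val_sqrtQ_inv, Prod.smul_mk, smul_eq_C_mul]
  ext : 1 <;> ring

theorem piHat_Yhat_piHat (p : V) : piHat (Yhat (piHat p)) = ((u ^ 2)⁻¹ : K) • Yhat' p := by
  rw [Yhat_piHat, piHat_smul, piHat_T_mul, Yhat']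

theorem That_add_self (p : V) : That p + p = (p.1, p.1) := by
  ext : 1 <;> simp [That]

theorem That_diag (f : L) : That (f, f) = 0 := by
  ext : 1 <;> simp [That]

theorem Yhat_diag (f : L) : Yhat (f, f) = (0, gam f) := by
  simp [Yhat, gamInv_eq_dilate, gam_eq_dilate]

theorem That_Yhat' (p : V) : That (Yhat' p) = (0, gam p.1) := by
  simp only [That, Yhat', Prod.mk.injEq, true_and]
  ring

/-- The spinor Dunkl operators represent the relations of the one-dimensional nil-DAHA:
`Ŷ∘Ŷ′ = id = Ŷ′∘Ŷ`, `π̂∘π̂ = id`, `T̂∘(T̂ + id) = 0`, `π̂∘Ŷ∘π̂ = q^{-1/2}·Ŷ′`, and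
`T̂∘Ŷ′ = Ŷ∘(T̂ + id)`. -/
theorem spinor_dunkl_nil_daha_relations :
    (∀ p : V, Yhat (Yhat' p) = p) ∧
    (∀ p : V, Yhat' (Yhat p) = p) ∧
    (∀ p : V, piHat (piHat p) = p) ∧
    (∀ p : V, That (That p + p) = 0) ∧
    (∀ p : V, piHat (Yhat (piHat p)) = ((u ^ 2)⁻¹ : K) • Yhat' p) ∧
    (∀ p : V, That (Yhat' p) = Yhat (That p + p)) :=
  ⟨Yhat_Yhat', Yhat'_Yhat, piHat_piHat, fun p => by rw [That_add_self, That_diag],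
    piHat_Yhat_piHat, fun p => by rw [That_add_self, Yhat_diag, That_Yhat']⟩
end
end

section
/- The symmetrized spinor Dunkl operator yields the q-Toda operator: T̂ ∘ (Ŷ + Ŷ′) = (Ŷ + Ŷ′) ∘ T̂ on V, and for every f ∈ L one has (Ŷ + Ŷ′)(f, f) = (𝒯(f), 𝒯(f)), where 𝒯 is the q-Toda operator 𝒯(f) := Γ^{-1}(f) + (1 − X^{-2})·Γ(f). In particular Ŷ + Ŷ′ preserves the subspace of symmetric spinors {(f,f) : f ∈ L} and acts on it as the q-Toda operator. -/
/-!
The spinor Dunkl operators for the q-Toda theory of type A₁, acting on the space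
`V = L × L` of spinors, where `L = K[X,X⁻¹]` is the ring of Laurent polynomials over
`K = ℚ(u)`, `q = u⁴`.
-/

noncomputable section

open LaurentPolynomial

/-- The q-Toda operator `𝒯(f) = Γ⁻¹(f) + (1 - X⁻²)·Γ(f)`. -/
def qToda (f : L) : L := gamInv f + (1 - T (-2)) * gam f

/-! `Γ` and `Γ⁻¹` are additive (they act diagonally on the monomials `T e`), so after
expanding the components both identities become identities in the commutative ring `L`;
the `X⁻²` terms of `T̂ ∘ (Ŷ + Ŷ′)` and `(Ŷ + Ŷ′) ∘ T̂` match because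
`Γ(X⁻²(f₂ - f₁)) = -Γ(X⁻²(f₁ - f₂))`. -/

namespace LaurentPolynomial

variable {R : Type*} [Semiring R]

def scaleMonomials (w : ℤ → R) : R[T;T⁻¹] →+ R[T;T⁻¹] where
  toFun f := f.coeff.sum fun e r => (r * w e) • T e
  map_zero' := by simp
  map_add' f g := by
    rw [AddMonoidAlgebra.coeff_add, Finsupp.sum_add_index'] <;> simp [add_mul, add_smul]

end LaurentPolynomial

open LaurentPolynomial

lemma gam_eq_scaleMonomials : gam = scaleMonomials fun e => (u ^ 2) ^ e := rfl

lemma gamInv_eq_scaleMonomials : gamInv = scaleMonomials fun e => (u ^ 2) ^ (-e) := rfl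

theorem That_Yhat_add_Yhat'_comm (p : V) :
    That (Yhat p + Yhat' p) = Yhat (That p) + Yhat' (That p) := by
  have h : T (-2) * (p.2 - p.1) = -(T (-2) * (p.1 - p.2)) := by ring
  simp only [That, Yhat, Yhat', Prod.mk_add_mk, h, gam_eq_scaleMonomials,
    gamInv_eq_scaleMonomials, map_sub, map_neg, map_zero, mul_zero, sub_zero, zero_sub,
    Prod.mk.injEq]
  constructor <;> ring

theorem Yhat_add_Yhat'_diag (f : L) : Yhat (f, f) + Yhat' (f, f) = (qToda f, qToda f) := by
  simp only [Yhat, Yhat', qToda, Prod.mk_add_mk, sub_self, mul_zero, gam_eq_scaleMonomials,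
    gamInv_eq_scaleMonomials, map_zero, Prod.mk.injEq]
  constructor <;> ring

/-- The symmetrized spinor Dunkl operator yields the q-Toda operator:
`T̂∘(Ŷ+Ŷ′) = (Ŷ+Ŷ′)∘T̂` on `V`, and for every `f ∈ L` one has
`(Ŷ+Ŷ′)(f,f) = (𝒯(f), 𝒯(f))`.  In particular `Ŷ+Ŷ′` preserves the subspace of
symmetric spinors `{(f,f) : f ∈ L}` and acts on it as the q-Toda operator. -/
theorem spinor_dunkl_symmetrization_qToda :
    (∀ p : V, That (Yhat p + Yhat' p) = Yhat (That p) + Yhat' (That p)) ∧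
    (∀ f : L, Yhat (f, f) + Yhat' (f, f) = (qToda f, qToda f)) :=
  ⟨That_Yhat_add_Yhat'_comm, Yhat_add_Yhat'_diag⟩
end
end
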